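/- The forgetful functor from the category of ffg-Elgot algebras for F to the base variety C creates sifted colimits: given a sifted diagram of ffg-Elgot algebras whose underlying diagram in C has a colimit, there is a unique ffg-Elgot algebra structure on the colimit making all colimit injections solution-preserving, and this is a colimit in the category of ffg-Elgot algebras. -/

import Mathlib

/-!
Since `F` preserves the colimit `K`, the algebra structures on the stages induce a unique one on
`K.pt`. A sifted category is connected, so `F X ⨿ -` preserves the colimit `K`; since `X ⟶ -` preserves
it too for ffg `X`, every ffg-equation `e : X ⟶ F X ⨿ K.pt` has the form `e' • ι_j` for an
equation `e'` over some stage `D j`, and any two such presentations are identified further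
along the diagram. Setting `e† := e'† ≫ ι_j` is therefore well defined, forced by the
requirement that the injections preserve solutions, and each Elgot axiom for `K.pt` is the
image under some `ι_j` of the same axiom at the stage `D j`.
-/

open CategoryTheory CategoryTheory.Limits Opposite

universe v u

variable {C : Type u} [Category.{v} C] [HasBinaryCoproducts C]

/-- `h • e`, renaming of parameters in an equation morphism. -/
noncomputable def bullet (F : C ⥤ C) {X A B : C} (e : X ⟶ F.obj X ⨿ A) (h : A ⟶ B) :
    X ⟶ F.obj X ⨿ B :=
  e ≫ coprod.map (𝟙 (F.obj X)) h

/-- `e ▫ f`, the combination of two equation morphisms. -/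
noncomputable def square (F : C ⥤ C) {X Y Z : C} (e : X ⟶ F.obj X ⨿ Y)
    (f : Y ⟶ F.obj Y ⨿ Z) : X ⨿ Y ⟶ F.obj (X ⨿ Y) ⨿ Z :=
  coprod.desc e coprod.inr ≫ coprod.map (𝟙 (F.obj X)) f ≫
    coprod.desc (F.map coprod.inl ≫ coprod.inl) (coprod.map (F.map coprod.inr) (𝟙 Z))

/-- `w ▫ c`, combining an equation `w : X ⟶ FX + V` with a coalgebra `c : V ⟶ FV`
into a coalgebra on `X + V`. -/
noncomputable def squareC (F : C ⥤ C) {X V : C} (w : X ⟶ F.obj X ⨿ V) (c : V ⟶ F.obj V) :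
    X ⨿ V ⟶ F.obj (X ⨿ V) :=
  coprod.desc w coprod.inr ≫ coprod.map (𝟙 (F.obj X)) c ≫
    coprod.desc (F.map coprod.inl) (F.map coprod.inr)

/-- The type of solution operators on `A`, assigning morphisms to ffg-equations. -/
abbrev SolOp (F : C ⥤ C) (FFG : C → Prop) (A : C) : Type _ :=
  ∀ ⦃X : C⦄, FFG X → (X ⟶ F.obj X ⨿ A) → (X ⟶ A)

/-- `(A, a, sol)` is an ffg-Elgot algebra: `sol` assigns to every ffg-equation a solution,
subject to Weak Functoriality and Compositionality. -/
structure IsSolutionOp (F : C ⥤ C) (FFG : C → Prop) {A : C} (a : F.obj A ⟶ A)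
    (sol : SolOp F FFG A) : Prop where
  solves : ∀ {X : C} (hX : FFG X) (e : X ⟶ F.obj X ⨿ A),
    sol hX e = e ≫ coprod.map (F.map (sol hX e)) (𝟙 A) ≫ coprod.desc a (𝟙 A)
  weakFunctorial : ∀ {X Y Z : C} (hX : FFG X) (hY : FFG Y), FFG Z →
    ∀ (e : X ⟶ F.obj X ⨿ Z) (f : Y ⟶ F.obj Y ⨿ Z) (m : X ⟶ Y),
      e ≫ coprod.map (F.map m) (𝟙 Z) = m ≫ f →
      ∀ h : Z ⟶ A, sol hX (bullet F e h) = m ≫ sol hY (bullet F f h)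
  compositional : ∀ {X Y : C} (hX : FFG X) (hY : FFG Y) (hXY : FFG (X ⨿ Y))
    (e : X ⟶ F.obj X ⨿ Y) (f : Y ⟶ F.obj Y ⨿ A),
      sol hX (bullet F e (sol hY f)) = coprod.inl ≫ sol hXY (square F e f)

/-- `h : A ⟶ B` preserves solutions. -/
def SolPres (F : C ⥤ C) (FFG : C → Prop) {A B : C}
    (solA : SolOp F FFG A) (solB : SolOp F FFG B) (h : A ⟶ B) : Prop :=
  ∀ ⦃X : C⦄ (hX : FFG X) (e : X ⟶ F.obj X ⨿ A),
    solB hX (bullet F e h) = solA hX e ≫ h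

/-- The category of `F`-coalgebras with carrier satisfying `FFG`. -/
abbrev FFGCoalg (F : C ⥤ C) (FFG : C → Prop) : Type _ :=
  ObjectProperty.FullSubcategory (fun c : Endofunctor.Coalgebra F => FFG c.V)

/-- The inclusion diagram of ffg-carried coalgebras into `C`. -/
noncomputable def coalgDiagram (F : C ⥤ C) (FFG : C → Prop) : FFGCoalg F FFG ⥤ C :=
  ObjectProperty.ι _ ⋙ Endofunctor.Coalgebra.forget F

/-- The canonical diagram of ffg objects over `A`. -/
noncomputable def canonicalDiagram (FFG : C → Prop) (A : C) :
    ObjectProperty.FullSubcategory (fun p : Over A => FFG p.left) ⥤ C :=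
  ObjectProperty.ι _ ⋙ Over.forget A

/-- The canonical cocone on the canonical diagram of ffg objects over `A`. -/
noncomputable def canonicalCocone (FFG : C → Prop) (A : C) :
    Cocone (canonicalDiagram FFG A) where
  pt := A
  ι :=
    { app := fun p => p.obj.hom
      naturality := by
        intro p q f
        simp only [canonicalDiagram, Functor.comp_map, Functor.const_obj_obj,
          Functor.const_obj_map, Category.comp_id]
        simpa using Over.w f.hom }

/-- The endofunctor `F(-) + Y`. -/
noncomputable def withParam (F : C ⥤ C) (Y : C) : C ⥤ C where
  obj X := F.obj X ⨿ Y
  map f := coprod.map (F.map f) (𝟙 Y)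
  map_id := by intros; simp
  map_comp := by intros; simp

section ConnectedCoproduct

variable {J : Type v} [SmallCategory J]

/- The objects of `D ⋙ coprod.functor.obj A` are coproducts only after unfolding the
composite, which is why the proof rewrites with `erw`. -/
lemma coprod_preservesConnectedColimits [IsConnected J] (A : C) :
    PreservesColimitsOfShape J (coprod.functor.obj A) where
  preservesColimit {D} :=
    { preserves := fun {K} hK => by
        let inner (s : Cocone (D ⋙ coprod.functor.obj A)) : Cocone D :=
          { pt := s.pt
            ι := { app := fun j => coprod.inr ≫ s.ι.app j
                   naturality := fun j j' f => by
                     erw [Category.comp_id, ← s.w f, coprod.inr_map_assoc] } }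
        have inl_const (s : Cocone (D ⋙ coprod.functor.obj A)) (j j' : J) :
            coprod.inl ≫ s.ι.app j = coprod.inl ≫ s.ι.app j' := by
          refine constant_of_preserves_morphisms (fun j => coprod.inl ≫ s.ι.app j)
            (fun j j' f => ?_) j j'
          rw [← s.w f]
          exact (coprod.inl_map_assoc (𝟙 A) (D.map f) _).trans (Category.id_comp _)
        exact ⟨{
          desc := fun s =>
            coprod.desc (coprod.inl ≫ s.ι.app (Classical.arbitrary J)) (hK.desc (inner s))
          fac := fun s j => by
            apply coprod.hom_ext
            · erw [coprod.inl_map_assoc, Category.id_comp, coprod.inl_desc]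
              exact inl_const s _ j
            · erw [coprod.inr_map_assoc, coprod.inr_desc]
              exact hK.fac (inner s) j
          uniq := fun s m hm => by
            apply coprod.hom_ext
            · erw [coprod.inl_desc, ← hm, coprod.inl_map_assoc, Category.id_comp]
              rfl
            · erw [coprod.inr_desc]
              refine hK.uniq (inner s) _ fun j => ?_
              show _ = coprod.inr ≫ s.ι.app j
              erw [← hm j, coprod.inr_map_assoc]
              rfl }⟩ }

end ConnectedCoproduct

namespace CategoryTheory.Limits.IsColimit

variable {J : Type v} [SmallCategory J] {D : J ⥤ C} {K : Cocone D}
  (X : C) [PreservesColimitsOfShape J (coyoneda.obj (Opposite.op X))]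

omit [HasBinaryCoproducts C]

lemma exists_comp_ι_eq_of_preserves (hK : IsColimit K) (g : X ⟶ K.pt) :
    ∃ (j : J) (g' : X ⟶ D.obj j), g' ≫ K.ι.app j = g :=
  Types.jointly_surjective _ (isColimitOfPreserves (coyoneda.obj (Opposite.op X)) hK) g

noncomputable def homDesc (hK : IsColimit K) {T : Type v} (Φ : ∀ j, (X ⟶ D.obj j) → T)
    (hΦ : ∀ ⦃j j' : J⦄ (f : j ⟶ j') (g : X ⟶ D.obj j), Φ j' (g ≫ D.map f) = Φ j g) :
    (X ⟶ K.pt) → T :=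
  (isColimitOfPreserves (coyoneda.obj (Opposite.op X)) hK).desc
    { pt := T
      ι := { app := fun j => TypeCat.ofHom (Φ j)
             naturality := fun j j' f => by ext g; exact hΦ f g } }

lemma homDesc_comp_ι (hK : IsColimit K) {T : Type v} (Φ : ∀ j, (X ⟶ D.obj j) → T)
    (hΦ : ∀ ⦃j j' : J⦄ (f : j ⟶ j') (g : X ⟶ D.obj j), Φ j' (g ≫ D.map f) = Φ j g)
    {j : J} (g : X ⟶ D.obj j) : hK.homDesc X Φ hΦ (g ≫ K.ι.app j) = Φ j g :=
  ConcreteCategory.congr_hom ((isColimitOfPreserves (coyoneda.obj (Opposite.op X)) hK).fac _ j) g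

end CategoryTheory.Limits.IsColimit

section Equations

variable (F : C ⥤ C)

lemma bullet_comp {X A B B' : C} (e : X ⟶ F.obj X ⨿ A) (h : A ⟶ B) (k : B ⟶ B') :
    bullet F e (h ≫ k) = bullet F (bullet F e h) k := by
  simp [bullet]

lemma square_bullet {X Y Z W : C} (e : X ⟶ F.obj X ⨿ Y) (f : Y ⟶ F.obj Y ⨿ Z) (k : Z ⟶ W) :
    square F e (bullet F f k) = bullet F (square F e f) k := by
  simp only [square, bullet]
  apply coprod.hom_ext <;> simp

lemma solution_comp_hom {X A B : C} {a : F.obj A ⟶ A} {b : F.obj B ⟶ B} {h : A ⟶ B}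
    (hh : a ≫ h = F.map h ≫ b) {e : X ⟶ F.obj X ⨿ A} {s : X ⟶ A}
    (hs : s = e ≫ coprod.map (F.map s) (𝟙 A) ≫ coprod.desc a (𝟙 A)) :
    s ≫ h = bullet F e h ≫ coprod.map (F.map (s ≫ h)) (𝟙 B) ≫ coprod.desc b (𝟙 B) := by
  conv_lhs => rw [hs]
  simp only [bullet, Category.assoc]
  congr 1
  apply coprod.hom_ext <;> simp [hh]

end Equations

section Lifting

variable {F : C ⥤ C} {FFG : C → Prop} {J : Type v} [SmallCategory J] {D : J ⥤ C} {K : Cocone D}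

def algebraCocone (K : Cocone D) (a : ∀ j : J, F.obj (D.obj j) ⟶ D.obj j)
    (ha : ∀ ⦃j j' : J⦄ (f : j ⟶ j'), a j ≫ D.map f = F.map (D.map f) ≫ a j') :
    Cocone (D ⋙ F) where
  pt := K.pt
  ι :=
    { app := fun j => a j ≫ K.ι.app j
      naturality := fun j j' f => by simp [← reassoc_of% ha f] }

lemma sol_bullet_map_comp_ι (K : Cocone D) {sol : ∀ j : J, SolOp F FFG (D.obj j)}
    (hsol : ∀ ⦃j j' : J⦄ (f : j ⟶ j'), SolPres F FFG (sol j) (sol j') (D.map f))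
    {X : C} (hX : FFG X) ⦃j j' : J⦄ (f : j ⟶ j') (e : X ⟶ F.obj X ⨿ D.obj j) :
    sol j' hX (bullet F e (D.map f)) ≫ K.ι.app j' = sol j hX e ≫ K.ι.app j := by
  rw [hsol f hX e, Category.assoc, K.w f]

variable [IsConnected J] (hK : IsColimit K)
  (hpp : ∀ X : C, FFG X → Nonempty (PreservesColimitsOfShape J (coyoneda.obj (op X))))
  {sol : ∀ j : J, SolOp F FFG (D.obj j)}

include hK in
lemma exists_bullet_eq {X : C} [PreservesColimitsOfShape J (coyoneda.obj (op X))]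
    (e : X ⟶ F.obj X ⨿ K.pt) :
    ∃ (j : J) (e' : X ⟶ F.obj X ⨿ D.obj j), bullet F e' (K.ι.app j) = e :=
  have := coprod_preservesConnectedColimits (J := J) (F.obj X)
  (isColimitOfPreserves (coprod.functor.obj (F.obj X)) hK).exists_comp_ι_eq_of_preserves X e

noncomputable def liftSol
    (hsol : ∀ ⦃j j' : J⦄ (f : j ⟶ j'), SolPres F FFG (sol j) (sol j') (D.map f)) :
    SolOp F FFG K.pt := fun X hX =>
  have := (hpp X hX).some
  have := coprod_preservesConnectedColimits (J := J) (F.obj X)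
  (isColimitOfPreserves (coprod.functor.obj (F.obj X)) hK).homDesc X
    (fun j e => sol j hX e ≫ K.ι.app j) (sol_bullet_map_comp_ι K hsol hX)

lemma solPres_liftSol
    (hsol : ∀ ⦃j j' : J⦄ (f : j ⟶ j'), SolPres F FFG (sol j) (sol j') (D.map f)) (j : J) :
    SolPres F FFG (sol j) (liftSol hK hpp hsol) (K.ι.app j) := by
  intro X hX e
  have := (hpp X hX).some
  have := coprod_preservesConnectedColimits (J := J) (F.obj X)
  exact (isColimitOfPreserves (coprod.functor.obj (F.obj X)) hK).homDesc_comp_ι X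
    (fun j e => sol j hX e ≫ K.ι.app j) (sol_bullet_map_comp_ι K hsol hX) e

include hK hpp in
lemma isSolutionOp_of_solPres {a : ∀ j : J, F.obj (D.obj j) ⟶ D.obj j}
    (hop : ∀ j, IsSolutionOp F FFG (a j) (sol j))
    {aP : F.obj K.pt ⟶ K.pt} (ha : ∀ j, a j ≫ K.ι.app j = F.map (K.ι.app j) ≫ aP)
    {solP : SolOp F FFG K.pt} (hpres : ∀ j, SolPres F FFG (sol j) solP (K.ι.app j)) :
    IsSolutionOp F FFG aP solP where
  solves {X} hX e := by
    have := (hpp X hX).some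
    obtain ⟨j, e, rfl⟩ := exists_bullet_eq hK e
    rw [hpres j hX e]
    exact solution_comp_hom F (ha j) ((hop j).solves hX e)
  weakFunctorial {X Y Z} hX hY hZ e f m hm h := by
    have := (hpp Z hZ).some
    obtain ⟨j, h, rfl⟩ := hK.exists_comp_ι_eq_of_preserves Z h
    rw [bullet_comp, bullet_comp, hpres j hX, hpres j hY,
      (hop j).weakFunctorial hX hY hZ e f m hm h, Category.assoc]
  compositional {X Y} hX hY hXY e f := by
    have := (hpp Y hY).some
    obtain ⟨j, f, rfl⟩ := exists_bullet_eq hK f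
    rw [hpres j hY f, bullet_comp, hpres j hX, (hop j).compositional hX hY hXY e f,
      square_bullet, hpres j hXY, Category.assoc]

include hK hpp in
lemma solOp_ext_of_solPres {solP solP' : SolOp F FFG K.pt}
    (hpres : ∀ j, SolPres F FFG (sol j) solP (K.ι.app j))
    (hpres' : ∀ j, SolPres F FFG (sol j) solP' (K.ι.app j)) : solP = solP' := by
  funext X hX e
  have := (hpp X hX).some
  obtain ⟨j, e, rfl⟩ := exists_bullet_eq hK e
  rw [hpres j hX e, hpres' j hX e]

include hK hpp in
lemma solPres_of_comp_ι {solP : SolOp F FFG K.pt}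
    (hpres : ∀ j, SolPres F FFG (sol j) solP (K.ι.app j))
    {B : C} {solB : SolOp F FFG B} {h : K.pt ⟶ B}
    (hh : ∀ j, SolPres F FFG (sol j) solB (K.ι.app j ≫ h)) : SolPres F FFG solP solB h := by
  intro X hX e
  have := (hpp X hX).some
  obtain ⟨j, e, rfl⟩ := exists_bullet_eq hK e
  rw [← bullet_comp, hh j hX e, hpres j hX e, Category.assoc]

end Lifting

/-- The forgetful functor from ffg-Elgot algebras to the base variety creates sifted
colimits: given a sifted diagram of ffg-Elgot algebras and a colimit of the underlying
diagram, there is a unique ffg-Elgot algebra structure on the colimit making all colimit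
injections solution-preserving, and it is a colimit in the category of ffg-Elgot
algebras. -/
theorem forget_creates_sifted_colimits
    (F : C ⥤ C) (FFG : C → Prop)
    {J : Type v} [SmallCategory J] [IsSifted J]
    -- F preserves sifted colimits, hom-functors of ffg objects preserve sifted colimits
    (hFpres : Nonempty (PreservesColimitsOfShape J F))
    (hpp : ∀ X : C, FFG X →
      Nonempty (PreservesColimitsOfShape J (coyoneda.obj (op X))))
    -- a sifted diagram of ffg-Elgot algebras
    (D : J ⥤ C)
    (a : ∀ j : J, F.obj (D.obj j) ⟶ D.obj j)
    (sol : ∀ j : J, SolOp F FFG (D.obj j))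
    (hop : ∀ j : J, IsSolutionOp F FFG (a j) (sol j))
    (hconn : ∀ {j j' : J} (f : j ⟶ j'),
      (a j ≫ D.map f = F.map (D.map f) ≫ a j') ∧
      SolPres F FFG (sol j) (sol j') (D.map f))
    -- a colimit of the underlying diagram in C
    (K : Cocone D) (hK : IsColimit K) :
    ∃ aP : F.obj K.pt ⟶ K.pt,
      -- the unique F-algebra structure making the injections homomorphisms
      (∀ j : J, a j ≫ K.ι.app j = F.map (K.ι.app j) ≫ aP) ∧
      (∀ aP' : F.obj K.pt ⟶ K.pt,
        (∀ j : J, a j ≫ K.ι.app j = F.map (K.ι.app j) ≫ aP') → aP' = aP) ∧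
      ∃ solP : SolOp F FFG K.pt,
        IsSolutionOp F FFG aP solP ∧
        -- all colimit injections are solution-preserving
        (∀ j : J, SolPres F FFG (sol j) solP (K.ι.app j)) ∧
        -- uniqueness of the solution operator
        (∀ solP' : SolOp F FFG K.pt, IsSolutionOp F FFG aP solP' →
          (∀ j : J, SolPres F FFG (sol j) solP' (K.ι.app j)) → solP' = solP) ∧
        -- the lifted cocone is a colimit in the category of ffg-Elgot algebras
        (∀ {B : C} (b : F.obj B ⟶ B) (solB : SolOp F FFG B),
          IsSolutionOp F FFG b solB →
          ∀ m : ∀ j : J, D.obj j ⟶ B,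
            (∀ j, SolPres F FFG (sol j) solB (m j)) →
            (∀ {j j' : J} (f : j ⟶ j'), D.map f ≫ m j' = m j) →
            ∃! h : K.pt ⟶ B,
              SolPres F FFG solP solB h ∧ ∀ j : J, K.ι.app j ≫ h = m j) := by
  have := hFpres.some
  have hFK := isColimitOfPreserves F hK
  let cA := algebraCocone K a fun _ _ f => (hconn f).1
  have hsol : ∀ ⦃j j' : J⦄ (f : j ⟶ j'), SolPres F FFG (sol j) (sol j') (D.map f) :=
    fun _ _ f => (hconn f).2
  have hpres := solPres_liftSol hK hpp hsol
  refine ⟨hFK.desc cA, fun j => (hFK.fac cA j).symm,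
    fun aP' h => hFK.uniq cA aP' fun j => (h j).symm, liftSol hK hpp hsol,
    isSolutionOp_of_solPres hK hpp hop (fun j => (hFK.fac cA j).symm) hpres, hpres,
    fun solP' _ hpres' => solOp_ext_of_solPres hK hpp hpres' hpres, ?_⟩
  intro B _ solB _ m hm hnat
  let cm : Cocone D := ⟨B, ⟨m, fun j j' f => by simp [hnat f]⟩⟩
  refine ⟨hK.desc cm, ⟨solPres_of_comp_ι hK hpp hpres fun j => ?_, hK.fac cm⟩,
    fun h ⟨_, hh⟩ => hK.uniq cm h hh⟩
  exact (hK.fac cm j) ▸ hm j
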